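/- arXiv:1306.3797 — 3 statements merged into one kernel-verified Lean document; each statement's English description precedes it below -/
import Mathlib

section
/- Let (P, \mathcal{I}) be a po-independence system that is not a poset matroid. Then there exists an order-preserving weight function w : P → ℝ≥0 and sets A, B ∈ \mathcal{I} such that: w(b) = 1 for b ∈ B \ A, w(a) = α for a ∈ A with 1 < α < 1 + 1/(|A| - |A ∩ B|), w(x) = 0 otherwise, and for this w the set B has strictly greater total weight than any set in \mathcal{I} that is contained in A ∪ (P \ (A ∪ B)). -/
/-!
Take A, B witnessing the failure of the exchange axiom. If A ⊆ B, then B = A ∪ {b} for the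
single element b of B \ A, which is maximal there and makes A ∪ {b} = B independent; so A \ B is
nonempty, say of size n ≥ 1. Give weight α = 1 + 1/(2n) to A, 1 to B \ A and 0 elsewhere; this is
order-preserving because A and B are up-sets. A set avoiding B \ A weighs at most α|A| =
α|A ∩ B| + n + 1/2, while B weighs α|A ∩ B| + n + 1.
-/

open Finset

def IsUpset {P : Type*} [PartialOrder P] (S : Finset P) : Prop :=
  ∀ ⦃x⦄, x ∈ S → ∀ ⦃y⦄, x ≤ y → y ∈ S

def MaxIn {P : Type*} [PartialOrder P] (T : Finset P) (y : P) : Prop :=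
  y ∈ T ∧ ∀ z ∈ T, y ≤ z → z = y

def PosetMatroid {P : Type*} [PartialOrder P] [DecidableEq P]
    (I : Set (Finset P)) : Prop :=
  I.Nonempty ∧ (∀ S ∈ I, IsUpset S) ∧
  (∀ X Y : Finset P, Y ∈ I → IsUpset X → X ⊆ Y → X ∈ I) ∧
  (∀ X ∈ I, ∀ Y ∈ I, X.card < Y.card →
      ∃ y, MaxIn (Y \ X) y ∧ insert y X ∈ I)

section StepWeight

variable {P : Type*}

theorem exists_maxIn_of_nonempty [PartialOrder P] {T : Finset P} (hT : T.Nonempty) :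
    ∃ y, MaxIn T y := by
  obtain ⟨y, hyT, hy⟩ := T.exists_maximal hT
  exact ⟨y, hyT, fun z hz hyz => (hy hz hyz).antisymm hyz⟩

theorem exists_maxIn_insert_eq_of_subset [PartialOrder P] [DecidableEq P] {A B : Finset P}
    (hAB : A ⊆ B) (hcard : #B = #A + 1) : ∃ b, MaxIn (B \ A) b ∧ insert b A = B := by
  have hBA : (B \ A).Nonempty := by
    rw [sdiff_nonempty]
    intro hBA
    have := card_le_card hBA
    omega
  obtain ⟨b, hb⟩ := exists_maxIn_of_nonempty hBA
  obtain ⟨hbB, hbA⟩ := mem_sdiff.mp hb.1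
  refine ⟨b, hb, eq_of_subset_of_card_le (insert_subset hbB hAB) ?_⟩
  rw [card_insert_of_notMem hbA]
  omega

def stepWeight [DecidableEq P] (A B : Finset P) (α : ℝ) (x : P) : ℝ :=
  if x ∈ A then α else if x ∈ B then 1 else 0

theorem stepWeight_monotone [PartialOrder P] [DecidableEq P] {A B : Finset P} {α : ℝ}
    (hA : IsUpset A) (hB : IsUpset B) (hα : 1 ≤ α) : Monotone (stepWeight A B α) := by
  intro x y hxy
  unfold stepWeight
  by_cases hxA : x ∈ A
  · simp [hxA, hA hxA hxy]
  by_cases hxB : x ∈ B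
  · by_cases hyA : y ∈ A <;> simp [hxA, hxB, hyA, hB hxB hxy, hα]
  · simp only [hxA, hxB, if_false]
    split_ifs <;> linarith

theorem sum_stepWeight [DecidableEq P] (A B S : Finset P) (α : ℝ) :
    ∑ x ∈ S, stepWeight A B α x = α * #(S ∩ A) + #((S ∩ B) \ A) := by
  unfold stepWeight
  rw [sum_ite, sum_const, nsmul_eq_mul, sum_boole, filter_mem_eq_inter, mul_comm]
  congr 3
  ext x
  simp only [mem_filter, mem_inter, mem_sdiff]
  tauto

theorem sum_stepWeight_lt_of_subset [Fintype P] [DecidableEq P] {A B S : Finset P} {α : ℝ}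
    (hcard : #B = #A + 1) (hα₀ : 0 ≤ α) (hα : α * #(A \ B) < #(A \ B) + 1)
    (hS : S ⊆ A ∪ (univ \ (A ∪ B))) :
    ∑ x ∈ S, stepWeight A B α x < ∑ x ∈ B, stepWeight A B α x := by
  have hSB : (S ∩ B) \ A = ∅ := by
    ext x
    have := @hS x
    simp only [mem_sdiff, mem_inter, mem_union, mem_univ] at this ⊢
    tauto
  have hsplitA := card_sdiff_add_card_inter A B
  have hsplitB := card_sdiff_add_card_inter B A
  have hSA : (#(S ∩ A) : ℝ) ≤ #(A \ B) + #(A ∩ B) := by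
    exact_mod_cast (card_le_card inter_subset_right).trans hsplitA.ge
  have hBA : (#(B \ A) : ℝ) = #(A \ B) + 1 := by
    rw [inter_comm] at hsplitB
    exact_mod_cast (by omega : #(B \ A) = #(A \ B) + 1)
  rw [sum_stepWeight, sum_stepWeight, hSB, inter_comm B A, inter_self, hBA,
    card_empty, Nat.cast_zero, add_zero]
  calc α * #(S ∩ A) ≤ α * (#(A \ B) + #(A ∩ B)) := mul_le_mul_of_nonneg_left hSA hα₀
    _ < α * #(A ∩ B) + (#(A \ B) + 1) := by linarith

end StepWeight

theorem stmt2_general {P : Type*} [Fintype P] [PartialOrder P] [DecidableEq P]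
    (I : Set (Finset P))
    (hup : ∀ S ∈ I, IsUpset S)
    (hfail : ∃ A ∈ I, ∃ B ∈ I, B.card = A.card + 1 ∧
        ∀ b, MaxIn (B \ A) b → IsUpset (insert b A) → insert b A ∉ I) :
    ∃ (w : P → ℝ) (α : ℝ) (A B : Finset P), A ∈ I ∧ B ∈ I ∧
      (∀ x y : P, x ≤ y → w x ≤ w y) ∧
      (∀ b ∈ B \ A, w b = 1) ∧
      (∀ a ∈ A, w a = α) ∧
      1 < α ∧ α < 1 + 1 / ((A.card : ℝ) - ((A ∩ B).card : ℝ)) ∧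
      (∀ x, x ∉ A ∪ B → w x = 0) ∧
      (∀ S ∈ I, S ⊆ A ∪ (Finset.univ \ (A ∪ B)) →
        ∑ x ∈ S, w x < ∑ x ∈ B, w x) := by
  obtain ⟨A, hA, B, hB, hcard, hfail⟩ := hfail
  have hAB : (A \ B).Nonempty := by
    rw [sdiff_nonempty]
    intro hAB
    obtain ⟨b, hb, hbA⟩ := exists_maxIn_insert_eq_of_subset hAB hcard
    exact hfail b hb (hbA ▸ hup B hB) (hbA ▸ hB)
  have hn : (0 : ℝ) < #(A \ B) := by exact_mod_cast hAB.card_pos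
  have hdiff : (#A : ℝ) - #(A ∩ B) = #(A \ B) := by
    rw [← card_sdiff_add_card_inter A B]
    push_cast
    ring
  set α : ℝ := 1 + 1 / (2 * #(A \ B))
  have hα : 1 < α := by
    simp only [α]
    linarith [show 0 < 1 / (2 * (#(A \ B) : ℝ)) by positivity]
  have hαn : α * #(A \ B) = #(A \ B) + 1 / 2 := by simp only [α]; field_simp
  refine ⟨stepWeight A B α, α, A, B, hA, hB,
    fun x y => (stepWeight_monotone (hup A hA) (hup B hB) hα.le ·), ?_, ?_, hα, ?_, ?_,
    fun S _ hS => sum_stepWeight_lt_of_subset hcard (by linarith) (by linarith) hS⟩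
  · intro b hb
    simp [stepWeight, (mem_sdiff.mp hb).1, (mem_sdiff.mp hb).2]
  · intro a ha
    simp [stepWeight, ha]
  · rw [hdiff]
    simp only [α]
    gcongr
    linarith
  · intro x hx
    simp_all [stepWeight]

/-- if a po-independence system fails the exchange axiom, there
is an order-preserving weight function (α on A, 1 on B \ A, 0 elsewhere, with
1 < α < 1 + 1/(|A| - |A ∩ B|)) for which B outweighs every independent set
contained in A ∪ (P \ (A ∪ B)). -/
theorem stmt2 {P : Type*} [Fintype P] [PartialOrder P] [DecidableEq P]
    (I : Set (Finset P)) (hne : I.Nonempty)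
    (hup : ∀ S ∈ I, IsUpset S)
    (hdc : ∀ X Y : Finset P, Y ∈ I → IsUpset X → X ⊆ Y → X ∈ I)
    (hfail : ∃ A ∈ I, ∃ B ∈ I, B.card = A.card + 1 ∧
        ∀ b, MaxIn (B \ A) b → IsUpset (insert b A) → insert b A ∉ I) :
    ∃ (w : P → ℝ) (α : ℝ) (A B : Finset P), A ∈ I ∧ B ∈ I ∧
      (∀ x y : P, x ≤ y → w x ≤ w y) ∧
      (∀ b ∈ B \ A, w b = 1) ∧
      (∀ a ∈ A, w a = α) ∧
      1 < α ∧ α < 1 + 1 / ((A.card : ℝ) - ((A ∩ B).card : ℝ)) ∧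
      (∀ x, x ∉ A ∪ B → w x = 0) ∧
      (∀ S ∈ I, S ⊆ A ∪ (Finset.univ \ (A ∪ B)) →
        ∑ x ∈ S, w x < ∑ x ∈ B, w x) :=
  stmt2_general I hup hfail
end

section
/- Let (P, \mathcal{I}) be a poset matroid, and let S = {b_1, …, b_n} ∈ \mathcal{I} and A = {a_1, …, a_m} ∈ \mathcal{I} with w order-preserving, w(b_1) ≥ … ≥ w(b_n), w(a_1) ≥ … ≥ w(a_m). Suppose S is the output of the greedy algorithm PGREEDY (so in particular S cannot be extended: for every up-set X with S ⊊ X, X ∉ \mathcal{I}, and at each step S chooses a maximal element of maximum weight among those extending the current set to an independent up-set). Then m ≤ n and w(a_i) ≤ w(b_i) for all i = 1, …, m; consequently w(A) ≤ w(S). -/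
/-!
Fix a threshold `c`. Since the greedy output is listed by decreasing weight, its elements of
weight above `c` form a prefix `b 0, …, b (K-1)`, an independent up-set by monotonicity of `w`.
If an independent `A` had more elements above `c`, the exchange axiom would give a maximal
element of weight above `c` extending that prefix, which the greedy step `K` would have preferred
to `b K`, of weight at most `c`. With `c = w (b i)` this yields `w (a i) ≤ w (b i)`; that `m ≤ n`
is the same exchange argument against the non-extendability of the greedy output.
-/

open Finset

section Order

variable {P : Type*} [PartialOrder P]

lemma IsUpset.filter_lt_of_monotone {S : Finset P} (hS : IsUpset S) {w : P → ℝ}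
    (hw : Monotone w) (c : ℝ) : IsUpset (S.filter (fun x => c < w x)) := by
  intro x hx y hxy
  rw [mem_filter] at hx ⊢
  exact ⟨hS hx.1 hxy, hx.2.trans_le (hw hxy)⟩

lemma maxIn_sdiff_of_isUpset_insert [DecidableEq P] {T X : Finset P} {y : P} (hyT : y ∈ T)
    (hyX : y ∉ X) (hup : IsUpset (insert y X)) : MaxIn (T \ X) y := by
  refine ⟨mem_sdiff.2 ⟨hyT, hyX⟩, fun z hz hyz => ?_⟩
  rcases mem_insert.1 (hup (mem_insert_self y X) hyz) with h | h
  · exact h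
  · exact absurd h (mem_sdiff.1 hz).2

lemma Finset.exists_filter_eq_filter_lt {α : Type*} [LinearOrder α] [Fintype α]
    {p : α → Prop} [DecidablePred p] (hp : ∀ i j, i ≤ j → p j → p i) {k : α} (hk : ¬ p k) :
    ∃ K, univ.filter p = univ.filter (· < K) := by
  have hne : (univ.filter (fun j => ¬ p j)).Nonempty := ⟨k, by simpa using hk⟩
  set K := (univ.filter (fun j => ¬ p j)).min' hne
  have hK : ¬ p K := by simpa using (univ.filter (fun j => ¬ p j)).min'_mem hne
  refine ⟨K, Finset.ext fun j => ?_⟩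
  simp only [mem_filter, mem_univ, true_and]
  constructor
  · intro hj
    by_contra! hKj
    exact hK (hp K j hKj hj)
  · intro hjK
    by_contra hj
    exact (min'_le _ j (by simpa using hj)).not_gt hjK

end Order

namespace PosetMatroid

variable {P : Type*} [PartialOrder P] [DecidableEq P] {I : Set (Finset P)}

lemma filter_lt_mem (hI : PosetMatroid I) {w : P → ℝ} (hw : Monotone w) {S : Finset P}
    (hS : S ∈ I) (c : ℝ) : S.filter (fun x => c < w x) ∈ I :=
  hI.2.2.1 _ _ hS ((hI.2.1 S hS).filter_lt_of_monotone hw c) (filter_subset _ _)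

lemma card_le_of_forall_ssuperset_notMem (hI : PosetMatroid I) {S A : Finset P} (hS : S ∈ I)
    (hSmax : ∀ X : Finset P, IsUpset X → S ⊂ X → X ∉ I) (hA : A ∈ I) : A.card ≤ S.card := by
  by_contra! hlt
  obtain ⟨y, hy, hyI⟩ := hI.2.2.2 S hS A hA hlt
  exact hSmax _ (hI.2.1 _ hyI) (ssubset_insert (mem_sdiff.1 hy.1).2) hyI

lemma card_filter_lt_le_of_greedy [Fintype P] (hI : PosetMatroid I) {w : P → ℝ}
    (hw : Monotone w) {n : ℕ} {b : Fin n → P}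
    (hS : image b univ ∈ I) (hbdec : ∀ i j : Fin n, i ≤ j → w (b j) ≤ w (b i))
    (hSmax : ∀ X : Finset P, IsUpset X → image b univ ⊂ X → X ∉ I)
    (hgreedy : ∀ k : Fin n, ∀ y : P,
        MaxIn (univ \ image b (univ.filter (· < k))) y →
        insert y (image b (univ.filter (· < k))) ∈ I → w y ≤ w (b k))
    {A : Finset P} (hA : A ∈ I) (c : ℝ) :
    (A.filter (fun x => c < w x)).card ≤ ((image b univ).filter (fun x => c < w x)).card := by
  by_cases hall : ∀ k, c < w (b k)
  · rw [filter_true_of_mem (s := image b univ) (by simpa using hall)]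
    exact (card_filter_le _ _).trans (hI.card_le_of_forall_ssuperset_notMem hS hSmax hA)
  push Not at hall
  obtain ⟨k, hk⟩ := hall
  obtain ⟨K, hK⟩ := exists_filter_eq_filter_lt (p := fun j => c < w (b j))
    (fun i j hij hj => hj.trans_le (hbdec i j hij)) hk.not_gt
  have hprefix : (image b univ).filter (fun x => c < w x) = image b (univ.filter (· < K)) := by
    rw [filter_image, ← hK]
  have hwK : w (b K) ≤ c := by
    have : K ∉ univ.filter (· < K) := by simp
    simpa [← hK] using this
  rw [hprefix]
  by_contra! hlt
  obtain ⟨y, hy, hyI⟩ := hI.2.2.2 _ (hprefix ▸ hI.filter_lt_mem hw hS c) _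
    (hI.filter_lt_mem hw hA c) hlt
  obtain ⟨hyA, hyB⟩ := mem_sdiff.1 hy.1
  have hymax := maxIn_sdiff_of_isUpset_insert (mem_univ y) hyB (hI.2.1 _ hyI)
  linarith [(mem_filter.1 hyA).2, hgreedy K y hymax hyI]

end PosetMatroid

lemma Fin.sum_castLE_le {n m : ℕ} (hmn : m ≤ n) {f : Fin n → ℝ} (hf : ∀ j, 0 ≤ f j) :
    ∑ i : Fin m, f (Fin.castLE hmn i) ≤ ∑ j : Fin n, f j := by
  refine le_of_eq_of_le (sum_map univ (Fin.castLEEmb hmn) f).symm ?_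
  exact sum_le_sum_of_subset_of_nonneg (subset_univ _) (fun j _ _ => hf j)

/-- if S = {b 0, …, b (n-1)} is a greedy output (it cannot be
extended to a larger independent up-set, and each b k has maximum weight
among the maximal elements extending the current prefix to an independent
set) and A = {a 0, …, a (m-1)} is any independent set, both listed in
weight-decreasing order, then m ≤ n, w(a i) ≤ w(b i) for each i, and
w(A) ≤ w(S). -/
theorem stmt4 {P : Type*} [Fintype P] [PartialOrder P] [DecidableEq P]
    (I : Set (Finset P)) (hI : PosetMatroid I)
    (w : P → ℝ) (hw0 : ∀ x, 0 ≤ w x) (hw : ∀ x y : P, x ≤ y → w x ≤ w y)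
    (n m : ℕ) (b : Fin n → P) (a : Fin m → P)
    (hbinj : Function.Injective b) (hainj : Function.Injective a)
    (hS : Finset.image b Finset.univ ∈ I) (hA : Finset.image a Finset.univ ∈ I)
    (hbdec : ∀ i j : Fin n, i ≤ j → w (b j) ≤ w (b i))
    (hadec : ∀ i j : Fin m, i ≤ j → w (a j) ≤ w (a i))
    (hSmax : ∀ X : Finset P, IsUpset X → Finset.image b Finset.univ ⊂ X →
        X ∉ I)
    (hgreedy : ∀ k : Fin n, ∀ y : P,
        MaxIn (Finset.univ \ Finset.image b ((Finset.univ : Finset (Fin n)).filter (· < k))) y →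
        insert y (Finset.image b ((Finset.univ : Finset (Fin n)).filter (· < k))) ∈ I →
        w y ≤ w (b k)) :
    (∃ hmn : m ≤ n, ∀ i : Fin m, w (a i) ≤ w (b (Fin.castLE hmn i))) ∧
      ∑ x ∈ Finset.image a Finset.univ, w x ≤
        ∑ x ∈ Finset.image b Finset.univ, w x := by
  have hmn : m ≤ n := by
    simpa [card_image_of_injective _ hainj, card_image_of_injective _ hbinj] using
      hI.card_le_of_forall_ssuperset_notMem hS hSmax hA
  have hpointwise : ∀ i : Fin m, w (a i) ≤ w (b (Fin.castLE hmn i)) := by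
    intro i
    by_contra! hlt
    set c := w (b (Fin.castLE hmn i))
    have hA_le : i.val + 1 ≤ ((image a univ).filter (fun x => c < w x)).card := by
      rw [← Fin.card_Iic, ← card_image_of_injective _ hainj]
      refine card_le_card fun x hx => ?_
      obtain ⟨j, hj, rfl⟩ := mem_image.1 hx
      exact mem_filter.2
        ⟨mem_image_of_mem _ (mem_univ j), hlt.trans_le (hadec j i (mem_Iic.1 hj))⟩
    have hS_le : ((image b univ).filter (fun x => c < w x)).card ≤ i.val := by
      rw [filter_image, ← Fin.val_castLE hmn i, ← Fin.card_Iio]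
      refine card_image_le.trans (card_le_card fun j hj => mem_Iio.2 ?_)
      by_contra! hij
      exact (mem_filter.1 hj).2.not_ge (hbdec _ _ hij)
    have := hI.card_filter_lt_le_of_greedy (fun x y => hw x y) hS hbdec hSmax hgreedy hA c
    omega
  refine ⟨⟨hmn, hpointwise⟩, ?_⟩
  rw [sum_image (fun x _ y _ h => hainj h), sum_image (fun x _ y _ h => hbinj h)]
  exact (sum_le_sum fun i _ => hpointwise i).trans (Fin.sum_castLE_le hmn fun j => hw0 _)
end

section
/- Let (P, \mathcal{I}) be a po-independence system. Suppose that for every order-preserving weight function w : P → ℝ≥0 and every maximal-by-inclusion greedy output S (a set built by iterating over P, at each step removing a maximal element of maximum weight among remaining elements and adding it to S whenever the result is in \mathcal{I}), the set S achieves the maximum of w over \mathcal{I}. Then (P, \mathcal{I}) satisfies the poset-matroid exchange axiom: for every X, Y ∈ \mathcal{I} with |X| < |Y|, there exists y maximal in Y \ X such that X ∪ {y} ∈ \mathcal{I}. -/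
/-!
Suppose the exchange axiom fails for `X, Y ∈ I` with `|X| < |Y|`. An independent set
`insert y X` is an up-set, so any `y ∈ Y \ X` with `insert y X ∈ I` would be maximal in
`Y \ X`; hence no element of `Y \ X` can be added to `X`. Give weight 1 to `X ∪ Y` and 0 to
the rest, and let PGREEDY examine `X`, then `Y \ X`, then the rest, each block top-down along
a linear extension. Every prefix of the first block is an up-set inside `X`, so PGREEDY takes
all of `X`; it then rejects all of `Y \ X` and gains no weight afterwards. Its output weighs
`|X| < |Y| = w(Y)`, contradicting optimality.
-/

open Finset

open Classical in
/-- One step of PGREEDY: add `m` to the current set `S` if the result is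
independent, otherwise discard `m`. -/
noncomputable def pgreedyStep {P : Type*} [DecidableEq P]
    (I : Set (Finset P)) (S : Finset P) (m : P) : Finset P :=
  if insert m S ∈ I then insert m S else S

/-- The output of PGREEDY when the elements of `P` are examined in the order
given by the list `l`. -/
noncomputable def pgreedy {P : Type*} [DecidableEq P]
    (I : Set (Finset P)) (l : List P) : Finset P :=
  l.foldl (pgreedyStep I) ∅

/-- `l` is an admissible examination order for PGREEDY: it enumerates `P`
without repetition and, at each step, the examined element is a maximal
element of maximum weight among the remaining ones. -/
def IsGreedyOrder {P : Type*} [Fintype P] [PartialOrder P] [DecidableEq P]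
    (w : P → ℝ) (l : List P) : Prop :=
  l.Nodup ∧ (∀ x : P, x ∈ l) ∧
  ∀ i : ℕ, ∀ hi : i < l.length,
    MaxIn (l.drop i).toFinset (l.get ⟨i, hi⟩) ∧
    ∀ z, MaxIn (l.drop i).toFinset z → w z ≤ w (l.get ⟨i, hi⟩)
section

variable {P : Type*} [DecidableEq P] {I : Set (Finset P)}

theorem foldl_pgreedyStep_eq_self {S : Finset P} :
    ∀ {l : List P}, (∀ a ∈ l, insert a S ∉ I) → l.foldl (pgreedyStep I) S = S
  | [], _ => rfl
  | a :: t, h => by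
    rw [List.foldl_cons, pgreedyStep, if_neg (h a List.mem_cons_self)]
    exact foldl_pgreedyStep_eq_self fun b hb => h b (List.mem_cons_of_mem a hb)

theorem foldl_pgreedyStep_subset (l : List P) (S : Finset P) :
    l.foldl (pgreedyStep I) S ⊆ S ∪ l.toFinset := by
  induction l generalizing S with
  | nil => simp
  | cons a t ih =>
    have hstep : pgreedyStep I S a ⊆ insert a S := by
      unfold pgreedyStep
      split_ifs
      exacts [le_rfl, subset_insert a S]
    calc t.foldl (pgreedyStep I) (pgreedyStep I S a)
        _ ⊆ pgreedyStep I S a ∪ t.toFinset := ih _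
        _ ⊆ insert a S ∪ t.toFinset := union_subset_union hstep le_rfl
        _ = S ∪ (a :: t).toFinset := by
          rw [List.toFinset_cons, union_insert, insert_union]

end

section

variable {P : Type*} [PartialOrder P] [DecidableEq P]

theorem IsUpset.union {S T : Finset P} (hS : IsUpset S) (hT : IsUpset T) :
    IsUpset (S ∪ T) := by
  intro x hx y hxy
  rcases mem_union.mp hx with h | h
  · exact mem_union_left _ (hS h hxy)
  · exact mem_union_right _ (hT h hxy)

theorem maxIn_sdiff_of_isUpset_insert_s18 {X Y : Finset P} {y : P}
    (h : IsUpset (insert y X)) (hy : y ∈ Y \ X) : MaxIn (Y \ X) y := by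
  refine ⟨hy, fun z hz hyz => ?_⟩
  rcases mem_insert.mp (h (mem_insert_self y X) hyz) with rfl | hzX
  · rfl
  · exact absurd hzX (mem_sdiff.mp hz).2

theorem Finset.exists_list_pairwise_not_le (s : Finset P) :
    ∃ l : List P, l.toFinset = s ∧ l.Pairwise (fun a b => ¬ a ≤ b) := by
  induction s using strongInduction with
  | H s ih =>
    rcases s.eq_empty_or_nonempty with rfl | hs
    · exact ⟨[], rfl, List.Pairwise.nil⟩
    obtain ⟨m, hm⟩ := exists_maximal hs
    obtain ⟨l, hl, hpw⟩ := ih (s.erase m) (erase_ssubset hm.prop)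
    refine ⟨m :: l, by rw [List.toFinset_cons, hl, insert_erase hm.prop], ?_⟩
    refine List.Pairwise.cons (fun b hb hmb => ?_) hpw
    rw [← List.mem_toFinset, hl] at hb
    exact ne_of_mem_erase hb (le_antisymm (hm.2 (mem_of_mem_erase hb) hmb) hmb)

theorem List.Pairwise.append_not_le_of_isUpset {l₁ l₂ : List P}
    (h₁ : l₁.Pairwise (fun a b => ¬ a ≤ b)) (h₂ : l₂.Pairwise (fun a b => ¬ a ≤ b))
    (hup : IsUpset l₁.toFinset) (hdisj : ∀ b ∈ l₂, b ∉ l₁) :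
    (l₁ ++ l₂).Pairwise (fun a b => ¬ a ≤ b) :=
  List.pairwise_append.2 ⟨h₁, h₂, fun _ ha b hb hab =>
    hdisj b hb (List.mem_toFinset.mp (hup (List.mem_toFinset.mpr ha) hab))⟩

theorem isGreedyOrder_of_pairwise [Fintype P] {w : P → ℝ} {l : List P}
    (hmem : ∀ x, x ∈ l) (hle : l.Pairwise (fun a b => ¬ a ≤ b))
    (hw : l.Pairwise (fun a b => w b ≤ w a)) : IsGreedyOrder w l := by
  refine ⟨hle.imp fun h e => h e.le, hmem, fun i hi => ?_⟩
  have hdrop := (hle.and hw).drop (i := i)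
  rw [List.drop_eq_getElem_cons hi, List.pairwise_cons] at hdrop
  simp only [List.get_eq_getElem, List.drop_eq_getElem_cons hi, List.toFinset_cons]
  refine ⟨⟨mem_insert_self _ _, fun z hz hiz => ?_⟩, fun z hz => ?_⟩
  · rcases mem_insert.mp hz with rfl | hz
    · rfl
    · exact absurd hiz (hdrop.1 z (List.mem_toFinset.mp hz)).1
  · rcases mem_insert.mp hz.1 with rfl | hz
    · rfl
    · exact (hdrop.1 z (List.mem_toFinset.mp hz)).2

theorem foldl_pgreedyStep_eq_union {I : Set (Finset P)} {X : Finset P}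
    (hdc : ∀ T, IsUpset T → T ⊆ X → T ∈ I)
    {l : List P} (hl : l.Pairwise (fun a b => ¬ a < b)) {S : Finset P} (hS : IsUpset S)
    (hSl : IsUpset (S ∪ l.toFinset)) (hSlX : S ∪ l.toFinset ⊆ X) :
    l.foldl (pgreedyStep I) S = S ∪ l.toFinset := by
  induction l generalizing S with
  | nil => simp
  | cons a t ih =>
    have hunion : insert a S ∪ t.toFinset = S ∪ (a :: t).toFinset := by
      rw [List.toFinset_cons, union_insert, insert_union]
    have hup : IsUpset (insert a S) := by
      intro x hx y hxy
      rcases mem_insert.mp hx with rfl | hxS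
      · rcases hxy.eq_or_lt with rfl | hlt
        · exact mem_insert_self x S
        rw [← hunion] at hSl
        rcases mem_union.mp (hSl (mem_union_left _ hx) hxy) with hy | hy
        · exact hy
        · exact absurd hlt (List.rel_of_pairwise_cons hl (List.mem_toFinset.mp hy))
      · exact mem_insert_of_mem (hS hxS hxy)
    have hmem : insert a S ∈ I :=
      hdc _ hup ((hunion ▸ subset_union_left).trans hSlX)
    rw [List.foldl_cons, pgreedyStep, if_pos hmem, ← hunion]
    exact ih hl.of_cons hup (hunion ▸ hSl) (hunion ▸ hSlX)

theorem pgreedy_append_inter_subset {I : Set (Finset P)} {X Y : Finset P}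
    (hdc : ∀ T, IsUpset T → T ⊆ X → T ∈ I) (hX : IsUpset X)
    (hins : ∀ y ∈ Y \ X, insert y X ∉ I) {l₁ l₂ l₃ : List P} (h₁ : l₁.toFinset = X)
    (p₁ : l₁.Pairwise (fun a b => ¬ a < b)) (h₂ : ∀ y ∈ l₂, y ∈ Y \ X)
    (h₃ : ∀ x ∈ l₃, x ∉ X ∪ Y) :
    pgreedy I (l₁ ++ l₂ ++ l₃) ∩ (X ∪ Y) ⊆ X := by
  have hrun₁ : l₁.foldl (pgreedyStep I) ∅ = X := by
    have h₁' : ∅ ∪ l₁.toFinset = X := by rw [empty_union, h₁]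
    rw [foldl_pgreedyStep_eq_union hdc p₁ (fun _ h => absurd h (notMem_empty _))
      (h₁' ▸ hX) h₁'.le, h₁']
  have hrun₂ : l₂.foldl (pgreedyStep I) X = X :=
    foldl_pgreedyStep_eq_self fun y hy => hins y (h₂ y hy)
  rw [pgreedy, List.foldl_append, List.foldl_append, hrun₁, hrun₂]
  intro x hx
  obtain ⟨hxrun, hxXY⟩ := mem_inter.mp hx
  rcases mem_union.mp (foldl_pgreedyStep_subset l₃ X hxrun) with hxX | hx₃
  · exact hxX
  · exact absurd hxXY (h₃ x (List.mem_toFinset.mp hx₃))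

theorem exists_isGreedyOrder_pgreedy_inter_subset [Fintype P]
    {I : Set (Finset P)} {X Y : Finset P} (hdc : ∀ T, IsUpset T → T ⊆ X → T ∈ I)
    (hX : IsUpset X) (hY : IsUpset Y) (hins : ∀ y ∈ Y \ X, insert y X ∉ I) :
    ∃ l, IsGreedyOrder (fun a => if a ∈ X ∪ Y then (1 : ℝ) else 0) l ∧
      pgreedy I l ∩ (X ∪ Y) ⊆ X := by
  obtain ⟨l₁, h₁, p₁⟩ := X.exists_list_pairwise_not_le
  obtain ⟨l₂, h₂, p₂⟩ := (Y \ X).exists_list_pairwise_not_le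
  obtain ⟨l₃, h₃, p₃⟩ := (univ \ (X ∪ Y)).exists_list_pairwise_not_le
  have m₂ : ∀ x, x ∈ l₂ ↔ x ∈ Y \ X := fun x => by rw [← List.mem_toFinset, h₂]
  have h₁₂ : (l₁ ++ l₂).toFinset = X ∪ Y := by
    rw [List.toFinset_append, h₁, h₂, union_sdiff_self_eq_union]
  have m₁₂ : ∀ x, x ∈ l₁ ++ l₂ ↔ x ∈ X ∪ Y := fun x => by
    rw [← List.mem_toFinset, h₁₂]
  have m₃ : ∀ x, x ∈ l₃ ↔ x ∉ X ∪ Y := fun x => by simp [← List.mem_toFinset, h₃]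
  have hle₁₂ : (l₁ ++ l₂).Pairwise (fun a b => ¬ a ≤ b) :=
    p₁.append_not_le_of_isUpset p₂ (h₁ ▸ hX) fun b hb hb₁ =>
      (mem_sdiff.mp ((m₂ b).mp hb)).2 (h₁ ▸ List.mem_toFinset.mpr hb₁)
  have hle : (l₁ ++ l₂ ++ l₃).Pairwise (fun a b => ¬ a ≤ b) :=
    hle₁₂.append_not_le_of_isUpset p₃ (h₁₂ ▸ hX.union hY)
      fun b hb hb₁₂ => (m₃ b).mp hb ((m₁₂ b).mp hb₁₂)
  have hw : (l₁ ++ l₂ ++ l₃).Pairwise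
      (fun a b => (if b ∈ X ∪ Y then (1 : ℝ) else 0) ≤ if a ∈ X ∪ Y then 1 else 0) := by
    refine List.pairwise_append.2 ⟨List.pairwise_of_forall_mem_list fun a ha b hb => ?_,
      List.pairwise_of_forall_mem_list fun a ha b hb => ?_, fun a ha b hb => ?_⟩
    · simp [(m₁₂ a).mp ha, (m₁₂ b).mp hb]
    · simp [(m₃ a).mp ha, (m₃ b).mp hb]
    · simp [(m₁₂ a).mp ha, (m₃ b).mp hb]
  refine ⟨_, isGreedyOrder_of_pairwise (fun x => ?_) hle hw,
    pgreedy_append_inter_subset hdc hX hins h₁ (p₁.imp fun h hlt => h hlt.le)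
      (fun y hy => (m₂ y).mp hy) fun x hx => (m₃ x).mp hx⟩
  by_cases hx : x ∈ X ∪ Y
  · exact List.mem_append_left _ ((m₁₂ x).mpr hx)
  · exact List.mem_append_right _ ((m₃ x).mpr hx)

end

theorem stmt18_general {P : Type*} [Fintype P] [PartialOrder P] [DecidableEq P]
    (I : Set (Finset P))
    (hup : ∀ S ∈ I, IsUpset S)
    (hdc : ∀ X Y : Finset P, Y ∈ I → IsUpset X → X ⊆ Y → X ∈ I)
    (hgreedy : ∀ w : P → ℝ, (∀ x, 0 ≤ w x) → (∀ x y : P, x ≤ y → w x ≤ w y) →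
        ∀ l : List P, IsGreedyOrder w l →
          ∀ A ∈ I, ∑ x ∈ A, w x ≤ ∑ x ∈ pgreedy I l, w x) :
    ∀ X ∈ I, ∀ Y ∈ I, X.card < Y.card →
      ∃ y, MaxIn (Y \ X) y ∧ insert y X ∈ I := by
  intro X hX Y hY hcard
  by_contra! hexch
  have hins : ∀ y ∈ Y \ X, insert y X ∉ I := fun y hy hyX =>
    hexch y (maxIn_sdiff_of_isUpset_insert_s18 (hup _ hyX) hy) hyX
  obtain ⟨l, hl, hrun⟩ := exists_isGreedyOrder_pgreedy_inter_subset
    (fun T hT hTX => hdc T X hX hT hTX) (hup X hX) (hup Y hY) hins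
  have hXYup := (hup X hX).union (hup Y hY)
  have hsum := hgreedy _ (fun x => by positivity)
    (fun x y hxy => by
      split_ifs with hx hy <;> norm_num
      exact hy (hXYup hx hxy)) l hl Y hY
  rw [sum_boole, sum_boole, filter_mem_eq_inter,
    filter_mem_eq_inter, inter_eq_left.mpr subset_union_right,
    Nat.cast_le] at hsum
  exact (hsum.trans (card_le_card hrun)).not_gt hcard

/-- if, for every order-preserving nonnegative weight function,
every output of PGREEDY achieves the maximum weight over the independent
sets, then the po-independence system satisfies the poset-matroid exchange
axiom. -/
theorem stmt18 {P : Type*} [Fintype P] [PartialOrder P] [DecidableEq P]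
    (I : Set (Finset P)) (hne : I.Nonempty)
    (hup : ∀ S ∈ I, IsUpset S)
    (hdc : ∀ X Y : Finset P, Y ∈ I → IsUpset X → X ⊆ Y → X ∈ I)
    (hgreedy : ∀ w : P → ℝ, (∀ x, 0 ≤ w x) → (∀ x y : P, x ≤ y → w x ≤ w y) →
        ∀ l : List P, IsGreedyOrder w l →
          ∀ A ∈ I, ∑ x ∈ A, w x ≤ ∑ x ∈ pgreedy I l, w x) :
    ∀ X ∈ I, ∀ Y ∈ I, X.card < Y.card →
      ∃ y, MaxIn (Y \ X) y ∧ insert y X ∈ I :=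
  stmt18_general I hup hdc hgreedy
end
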